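/- Define μ̃(s) = −s·log₂((1 + c^{1/s})/2) for s > 0 and c ∈ (0,1). Then μ̃ is concave in s, its derivative at s is μ̃'(s) = −log₂((1+c^{1/s})/2) + (c^{1/s} ln c) / (s(1+c^{1/s}) ln 2), and μ̃'(1) = 1 − log₂(1+c) + (c/(1+c))·log₂ c. -/

import Mathlib

/-!
Differentiating twice, the terms of first order in `log c` cancel and
`μ̃''(s) = -c^{1/s} (log c)² / (s³ (1 + c^{1/s})² log 2)`, which is nonpositive for `s > 0`.
-/

/-- The function μ̃ of the binary expurgated bound. -/
noncomputable def muTilde (c s : ℝ) : ℝ := -s * Real.logb 2 ((1 + c ^ (1 / s)) / 2)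

open Real

theorem concaveOn_of_hasDerivAt2_nonpos {D : Set ℝ} (hD : Convex ℝ D) (hDo : IsOpen D)
    {f f' f'' : ℝ → ℝ} (hf' : ∀ x ∈ D, HasDerivAt f (f' x) x)
    (hf'' : ∀ x ∈ D, HasDerivAt f' (f'' x) x) (hf''₀ : ∀ x ∈ D, f'' x ≤ 0) :
    ConcaveOn ℝ D f := by
  refine concaveOn_of_hasDerivWithinAt2_nonpos (f' := f') (f'' := f'') hD
    (fun x hx => (hf' x hx).continuousAt.continuousWithinAt) ?_ ?_ ?_ <;>
    rw [hDo.interior_eq]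
  exacts [fun x hx => (hf' x hx).hasDerivWithinAt, fun x hx => (hf'' x hx).hasDerivWithinAt,
    hf''₀]

section

variable {c s : ℝ}

noncomputable def muTildeDeriv (c s : ℝ) : ℝ :=
  -logb 2 ((1 + c ^ (1 / s)) / 2) + (c ^ (1 / s) * log c) / (s * (1 + c ^ (1 / s)) * log 2)

theorem hasDerivAt_const_rpow_one_div (hc : 0 < c) (hs : s ≠ 0) :
    HasDerivAt (fun t => c ^ (1 / t)) (-(log c * c ^ (1 / s)) / s ^ 2) s := by
  convert (hasDerivAt_inv hs).const_rpow hc using 1 <;> simp only [one_div]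
  ring

theorem hasDerivAt_log_one_add_rpow_one_div_div_two (hc : 0 < c) (hs : s ≠ 0) :
    HasDerivAt (fun t => log ((1 + c ^ (1 / t)) / 2))
      (-(log c * c ^ (1 / s)) / (s ^ 2 * (1 + c ^ (1 / s)))) s := by
  have hpos : 0 < c ^ (1 / s) := rpow_pos_of_pos hc _
  convert (((hasDerivAt_const_rpow_one_div hc hs).const_add 1).div_const 2).log
    (by positivity) using 1
  field_simp

theorem hasDerivAt_muTilde (hc : 0 < c) (hs : s ≠ 0) :
    HasDerivAt (muTilde c) (muTildeDeriv c s) s := by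
  have hpos : 0 < c ^ (1 / s) := rpow_pos_of_pos hc _
  have h : HasDerivAt (fun t => -t * log ((1 + c ^ (1 / t)) / 2) / log 2) _ s :=
    ((hasDerivAt_neg s).mul (hasDerivAt_log_one_add_rpow_one_div_div_two hc hs)).div_const _
  rw [show muTilde c = fun t => -t * log ((1 + c ^ (1 / t)) / 2) / log 2 by
    funext t; rw [muTilde, logb, mul_div_assoc]]
  refine h.congr_deriv ?_
  simp only [muTildeDeriv, logb]
  field_simp

theorem hasDerivAt_muTildeDeriv (hc : 0 < c) (hs : s ≠ 0) :
    HasDerivAt (muTildeDeriv c)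
      (-(c ^ (1 / s) * log c ^ 2) / (s ^ 3 * (1 + c ^ (1 / s)) ^ 2 * log 2)) s := by
  have hpos : 0 < c ^ (1 / s) := rpow_pos_of_pos hc _
  have hg := hasDerivAt_const_rpow_one_div hc hs
  have hden : s * (1 + c ^ (1 / s)) * log 2 ≠ 0 := by positivity
  have h : HasDerivAt (fun t => -(log ((1 + c ^ (1 / t)) / 2) / log 2)
      + c ^ (1 / t) * log c / (t * (1 + c ^ (1 / t)) * log 2)) _ s :=
    ((hasDerivAt_log_one_add_rpow_one_div_div_two hc hs).div_const _).neg.add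
      ((hg.mul_const _).div (((hasDerivAt_id' s).mul (hg.const_add 1)).mul_const _) hden)
  refine h.congr_deriv ?_
  field_simp
  ring

theorem muTildeDeriv_one (hc : 0 < c) :
    muTildeDeriv c 1 = 1 - logb 2 (1 + c) + c / (1 + c) * logb 2 c := by
  have h2 : 0 < log 2 := log_pos one_lt_two
  simp only [muTildeDeriv, div_one, rpow_one, one_mul, logb]
  rw [log_div (by positivity) two_ne_zero]
  field_simp
  ring

end

theorem muTilde_concave_and_deriv (c : ℝ) (hc : c ∈ Set.Ioo (0 : ℝ) 1) :
    ConcaveOn ℝ (Set.Ioi (0 : ℝ)) (muTilde c) ∧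
    (∀ s : ℝ, 0 < s → HasDerivAt (muTilde c)
      (-Real.logb 2 ((1 + c ^ (1 / s)) / 2)
        + (c ^ (1 / s) * Real.log c) / (s * (1 + c ^ (1 / s)) * Real.log 2)) s) ∧
    (-Real.logb 2 ((1 + c ^ ((1 : ℝ) / 1)) / 2)
        + (c ^ ((1 : ℝ) / 1) * Real.log c) / (1 * (1 + c ^ ((1 : ℝ) / 1)) * Real.log 2))
      = 1 - Real.logb 2 (1 + c) + (c / (1 + c)) * Real.logb 2 c := by
  refine ⟨?_, fun s hs => hasDerivAt_muTilde hc.1 hs.ne', muTildeDeriv_one hc.1⟩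
  refine concaveOn_of_hasDerivAt2_nonpos (convex_Ioi 0) isOpen_Ioi
    (fun s hs => hasDerivAt_muTilde hc.1 hs.ne')
    (fun s hs => hasDerivAt_muTildeDeriv hc.1 hs.ne') fun s (hs : 0 < s) => ?_
  have hpos : 0 < c ^ (1 / s) := rpow_pos_of_pos hc.1 _
  exact div_nonpos_of_nonpos_of_nonneg (neg_nonpos.2 (by positivity)) (by positivity)
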